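/- For α = β = 1/2, the map D : 𝒲 → 𝓕_{1/2} ⊗ 𝓕_{1/2} defined for a fixed a ∈ ℂ and fixed l ∈ ℤ by D(L_n) = a Σ_{i=l+1}^{l+n} (i - n/2) v_i ⊗ w_{n-i} for n ≥ 1, D(L_0) = 0, and D(L_n) = -a Σ_{i=l+n+1}^{l} (i - n/2) v_i ⊗ w_{n-i} for n ≤ -1, equals L_n ↦ L_n · (-a Σ_{i=0}^{l} v_i ⊗ w_{-i}) + a δ_{1/2,1/2}(L_n), where δ_{1/2,1/2} is the cocycle δ_{1-β,β} with β = 1/2; in particular D is a 1-cocycle. -/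

import Mathlib

/-!
All maps involved are homogeneous: `D19 a l n`, `deltaβ β n` and `L_n · Σ v_i ⊗ w_{-i}` are
supported on the anti-diagonal `p + q = n`, where the coefficient of `v_p ⊗ w_q` of `D19 a l n` is
`a (p - n/2)` times the signed indicator of `(l, l + n]`, and that of `deltaβ β n` is `p - nβ` times
the signed indicator of `(-1, n - 1]`. The identity is therefore a comparison of coefficients, with
a finite case analysis on the position of `p`. The cocycle property follows: `tact` is a
representation of the Witt algebra, so `n ↦ L_n · u` is a cocycle, and `δ_{1-β,β}` is a cocycle
by the same coefficient comparison.
-/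

/-- The action of the Witt basis element `L m` on `𝓕_α ⊗ 𝓕_β`, realized on
`(ℤ × ℤ) →₀ ℂ` with basis `v_i ⊗ w_j ↦ single (i, j) 1`:
`L_m · (v_i ⊗ w_j) = -(i + αm) v_{m+i} ⊗ w_j - (j + βm) v_i ⊗ w_{m+j}`. -/
noncomputable def tact (α β : ℂ) (m : ℤ) : ((ℤ × ℤ) →₀ ℂ) →ₗ[ℂ] ((ℤ × ℤ) →₀ ℂ) :=
  Finsupp.lsum ℂ fun p => LinearMap.toSpanSingleton ℂ ((ℤ × ℤ) →₀ ℂ)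
    ((-((p.1 : ℂ) + α * m)) • Finsupp.single (m + p.1, p.2) (1 : ℂ)
      + (-((p.2 : ℂ) + β * m)) • Finsupp.single (p.1, m + p.2) (1 : ℂ))

/-- A family `d n = d(L_n)` is a 1-cocycle of the Witt algebra with
coefficients in `𝓕_α ⊗ 𝓕_β`: `d([L_m, L_n]) = L_m · d(L_n) - L_n · d(L_m)`. -/
def IsCocycle (α β : ℂ) (d : ℤ → ((ℤ × ℤ) →₀ ℂ)) : Prop :=
  ∀ m n : ℤ, ((m - n : ℤ) : ℂ) • d (m + n) = tact α β m (d n) - tact α β n (d m)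

/-- `d` is a 1-coboundary: `d(L_n) = L_n · u` for a fixed `u` in the module. -/
def IsCoboundary (α β : ℂ) (d : ℤ → ((ℤ × ℤ) →₀ ℂ)) : Prop :=
  ∃ u : (ℤ × ℤ) →₀ ℂ, ∀ n : ℤ, d n = tact α β n u

/-- The map `δ_{1-β,β} : 𝒲 → 𝓕_{1-β} ⊗ 𝓕_β`; for `β = 1/2` this is `δ_{1/2,1/2}`. -/
noncomputable def deltaβ (β : ℂ) (n : ℤ) : (ℤ × ℤ) →₀ ℂ :=
  if 1 ≤ n then
    ∑ i ∈ Finset.Icc (0 : ℤ) (n - 1), ((i : ℂ) - n * β) • Finsupp.single (i, n - i) (1 : ℂ)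
  else if n = 0 then 0
  else - ∑ i ∈ Finset.Icc n (-1 : ℤ), ((i : ℂ) - n * β) • Finsupp.single (i, n - i) (1 : ℂ)

/-- The map `D : 𝒲 → 𝓕_{1/2} ⊗ 𝓕_{1/2}` of Statement 19, depending on
`a ∈ ℂ` and `l ∈ ℤ`. -/
noncomputable def D19 (a : ℂ) (l : ℤ) (n : ℤ) : (ℤ × ℤ) →₀ ℂ :=
  if 1 ≤ n then
    a • ∑ i ∈ Finset.Icc (l + 1) (l + n),
      ((i : ℂ) - (n : ℂ) / 2) • Finsupp.single (i, n - i) (1 : ℂ)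
  else if n = 0 then 0
  else
    -a • ∑ i ∈ Finset.Icc (l + n + 1) l,
      ((i : ℂ) - (n : ℂ) / 2) • Finsupp.single (i, n - i) (1 : ℂ)

lemma sum_Icc_smul_single_apply (A B n : ℤ) (c : ℤ → ℂ) (p q : ℤ) :
    (∑ i ∈ Finset.Icc A B, c i • Finsupp.single (i, n - i) (1 : ℂ)) (p, q)
      = if p + q = n ∧ A ≤ p ∧ p ≤ B then c p else 0 := by
  have hterm (i : ℤ) : (c i • Finsupp.single (i, n - i) (1 : ℂ)) (p, q)
      = if i = p then (if p + q = n then c p else 0) else 0 := by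
    simp only [Finsupp.smul_apply, Finsupp.single_apply, Prod.mk.injEq, smul_eq_mul]
    split_ifs <;> first | (exfalso; omega) | simp_all
  simp only [Finsupp.finsetSum_apply, hterm, Finset.sum_ite_eq', Finset.mem_Icc]
  split_ifs <;> first | rfl | omega

lemma tact_apply (α β : ℂ) (m : ℤ) (x : (ℤ × ℤ) →₀ ℂ) (p q : ℤ) :
    tact α β m x (p, q)
      = -((((p - m : ℤ) : ℂ) + α * m) * x (p - m, q)
          + (((q - m : ℤ) : ℂ) + β * m) * x (p, q - m)) := by
  induction x using Finsupp.induction_linear with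
  | zero => simp
  | add f g hf hg => simp only [map_add, Finsupp.add_apply, hf, hg]; ring1
  | single u b =>
      obtain ⟨i, j⟩ := u
      simp only [tact, Finsupp.lsum_single, LinearMap.toSpanSingleton_apply, Finsupp.smul_apply,
        Finsupp.add_apply, Finsupp.single_apply, smul_eq_mul, Prod.mk.injEq, eq_sub_iff_add_eq,
        add_comm m]
      split_ifs with h₁ h₂ h₂
      · obtain rfl : m = 0 := by omega
        obtain ⟨rfl, rfl⟩ := h₂
        push_cast; ring1
      · obtain ⟨rfl, rfl⟩ := h₁
        push_cast; ring1
      · obtain ⟨rfl, rfl⟩ := h₂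
        push_cast; ring1
      · ring1

lemma tact_commutator (α β : ℂ) (m n : ℤ) (x : (ℤ × ℤ) →₀ ℂ) :
    tact α β m (tact α β n x) - tact α β n (tact α β m x)
      = ((m - n : ℤ) : ℂ) • tact α β (m + n) x := by
  ext ⟨p, q⟩
  simp only [Finsupp.sub_apply, Finsupp.smul_apply, tact_apply, smul_eq_mul, sub_sub]
  rw [add_comm n m]
  push_cast
  ring1

lemma isCocycle_tact (α β : ℂ) (u : (ℤ × ℤ) →₀ ℂ) : IsCocycle α β (fun n => tact α β n u) :=
  fun m n => (tact_commutator α β m n u).symm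

lemma IsCocycle.add {α β : ℂ} {d e : ℤ → (ℤ × ℤ) →₀ ℂ} (hd : IsCocycle α β d)
    (he : IsCocycle α β e) : IsCocycle α β (d + e) := by
  intro m n
  simp only [Pi.add_apply, smul_add, map_add, hd m n, he m n]
  abel

lemma IsCocycle.smul {α β : ℂ} {d : ℤ → (ℤ × ℤ) →₀ ℂ} (c : ℂ) (hd : IsCocycle α β d) :
    IsCocycle α β (c • d) := by
  intro m n
  simp only [Pi.smul_apply, map_smul, smul_comm _ c, hd m n, smul_sub]

/-- `1` on `(A, B]` and `-1` on `(B, A]`: this packs the cases `n ≥ 1` and `n ≤ -1` of `D19` and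
`deltaβ` into one coefficient formula. -/
def signedIoc (A B p : ℤ) : ℂ := (if p ≤ B then 1 else 0) - (if p ≤ A then 1 else 0)

lemma deltaβ_apply (β : ℂ) (n p q : ℤ) :
    deltaβ β n (p, q) = if p + q = n then ((p : ℂ) - n * β) * signedIoc (-1) (n - 1) p else 0 := by
  unfold deltaβ signedIoc
  rcases lt_trichotomy n 0 with hn | rfl | hn
  · rw [if_neg (by omega), if_neg (by omega), Finsupp.neg_apply, sum_Icc_smul_single_apply]
    split_ifs <;> first | ring1 | omega
  · rw [if_neg (by omega), if_pos rfl, Finsupp.coe_zero, Pi.zero_apply]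
    split_ifs <;> first | ring1 | omega
  · rw [if_pos (by omega), sum_Icc_smul_single_apply]
    split_ifs <;> first | ring1 | omega

lemma D19_apply (a : ℂ) (l n p q : ℤ) :
    D19 a l n (p, q) = if p + q = n then a * ((p : ℂ) - n / 2) * signedIoc l (l + n) p else 0 := by
  unfold D19 signedIoc
  rcases lt_trichotomy n 0 with hn | rfl | hn
  · rw [if_neg (by omega), if_neg (by omega), Finsupp.smul_apply, sum_Icc_smul_single_apply,
      smul_eq_mul]
    split_ifs <;> first | ring1 | omega
  · rw [if_neg (by omega), if_pos rfl, Finsupp.coe_zero, Pi.zero_apply]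
    split_ifs <;> first | ring1 | omega
  · rw [if_pos (by omega), Finsupp.smul_apply, sum_Icc_smul_single_apply, smul_eq_mul]
    split_ifs <;> first | ring1 | omega

lemma isCocycle_of_apply_eq_ite {α β : ℂ} {d : ℤ → (ℤ × ℤ) →₀ ℂ} (f : ℤ → ℤ → ℂ)
    (hd : ∀ n p q, d n (p, q) = if p + q = n then f n p else 0)
    (hf : ∀ m n p q, p + q = m + n →
      ((m - n : ℤ) : ℂ) * f (m + n) p
        = -((((p - m : ℤ) : ℂ) + α * m) * f n (p - m) + (((q - m : ℤ) : ℂ) + β * m) * f n p)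
          + ((((p - n : ℤ) : ℂ) + α * n) * f m (p - n) + (((q - n : ℤ) : ℂ) + β * n) * f m p)) :
    IsCocycle α β d := by
  intro m n
  ext ⟨p, q⟩
  simp only [Finsupp.smul_apply, Finsupp.sub_apply, tact_apply, hd, smul_eq_mul]
  by_cases h : p + q = m + n
  · simp only [if_pos h, if_pos (show p - m + q = n by omega),
      if_pos (show p + (q - m) = n by omega), if_pos (show p - n + q = m by omega),
      if_pos (show p + (q - n) = m by omega), hf m n p q h]
    ring
  · simp only [if_neg h, if_neg (show ¬p - m + q = n by omega),
      if_neg (show ¬p + (q - m) = n by omega), if_neg (show ¬p - n + q = m by omega),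
      if_neg (show ¬p + (q - n) = m by omega)]
    ring

lemma isCocycle_deltaβ (β : ℂ) : IsCocycle (1 - β) β (deltaβ β) := by
  refine isCocycle_of_apply_eq_ite _ (deltaβ_apply β) fun m n p q h => ?_
  obtain rfl : q = m + n - p := by omega
  simp only [signedIoc]
  split_ifs <;> first | omega | (push_cast; ring1)

lemma D19_eq_tact_add_smul_deltaβ (a : ℂ) {l : ℤ} (hl : 0 ≤ l) (n : ℤ) :
    D19 a l n
      = tact (1/2) (1/2) n ((-a) • ∑ i ∈ Finset.Icc (0 : ℤ) l, Finsupp.single (i, -i) (1 : ℂ))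
        + a • deltaβ (1/2) n := by
  have hU (p q : ℤ) : (∑ i ∈ Finset.Icc (0 : ℤ) l, Finsupp.single (i, -i) (1 : ℂ)) (p, q)
      = if p + q = 0 ∧ 0 ≤ p ∧ p ≤ l then 1 else 0 := by
    simpa using sum_Icc_smul_single_apply 0 l 0 (fun _ => 1) p q
  ext ⟨p, q⟩
  simp only [Finsupp.add_apply, Finsupp.smul_apply, tact_apply, D19_apply, deltaβ_apply, hU,
    smul_eq_mul, signedIoc]
  by_cases h : p + q = n
  · obtain rfl : q = n - p := by omega
    split_ifs <;> first | omega | (push_cast; ring1)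
  · simp only [if_neg h, if_neg (show ¬(p - n + q = 0 ∧ 0 ≤ p - n ∧ p - n ≤ l) by omega),
      if_neg (show ¬(p + (q - n) = 0 ∧ 0 ≤ p ∧ p ≤ l) by omega)]
    ring

/-- for `α = β = 1/2`, the map `D = D19 a l` (with `l ≥ 0`, as in
the paper where `l` is a maximum of absolute values of indices) satisfies
`D(L_n) = L_n · (-a Σ_{i=0}^{l} v_i ⊗ w_{-i}) + a δ_{1/2,1/2}(L_n)`;
in particular `D` is a 1-cocycle. -/
theorem D19_eq_coboundary_add_delta (a : ℂ) (l : ℤ) (hl : 0 ≤ l) :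
    (∀ n : ℤ,
      D19 a l n
        = tact (1/2) (1/2) n
            ((-a) • ∑ i ∈ Finset.Icc (0 : ℤ) l, Finsupp.single (i, -i) (1 : ℂ))
          + a • deltaβ (1/2) n) ∧
    IsCocycle (1/2) (1/2) (D19 a l) := by
  have hD := D19_eq_tact_add_smul_deltaβ a hl
  refine ⟨hD, ?_⟩
  have hδ : IsCocycle (1/2) (1/2) (deltaβ (1/2)) := by
    have h := isCocycle_deltaβ (1/2)
    rwa [show (1 : ℂ) - 1/2 = 1/2 by norm_num] at h
  rw [funext hD]
  exact (isCocycle_tact _ _ _).add (hδ.smul a)
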